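/- For λ ∈ ℂ \ {0, 1}, let π_λ be the representation of the primitive poset (2,2,2) in V = ℂ³ with basis e₁, e₂, e₃ given by the three chains of subspaces V₁ = span{e₁} ⊆ V₂ = span{e₁, e₂}; V₃ = span{e₃} ⊆ V₄ = span{e₂, e₃}; V₅ = span{e₁+e₂+e₃} ⊆ V₆ = span{e₁+e₂+e₃, λe₁+e₂}. Then each π_λ is indecomposable, and for λ ≠ μ (both in ℂ \ {0,1}) the representations π_λ and π_μ are not isomorphic; in particular the poset (2,2,2) has infinitely many pairwise non-isomorphic indecomposable representations. -/

import Mathlib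

noncomputable section

/-- A system of subspaces `A : ι → Submodule ℂ V` is decomposable if the ambient space
splits as a direct sum of two nonzero subspaces compatible with every member of the system
(internal reformulation of being isomorphic to a direct sum of two representations with
nonzero ambient spaces). -/
def IsDecomposableSystem {ι V : Type*} [AddCommGroup V] [Module ℂ V]
    (A : ι → Submodule ℂ V) : Prop :=
  ∃ U W : Submodule ℂ V, IsCompl U W ∧ U ≠ ⊥ ∧ W ≠ ⊥ ∧
    ∀ i, A i = A i ⊓ U ⊔ A i ⊓ W

/-- A system of subspaces is indecomposable if the ambient space is nonzero and the system
is not decomposable. -/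
def IsIndecomposableSystem {ι V : Type*} [AddCommGroup V] [Module ℂ V]
    (A : ι → Submodule ℂ V) : Prop :=
  (∃ v : V, v ≠ 0) ∧ ¬ IsDecomposableSystem A

/-- Two systems of subspaces are isomorphic if there is an invertible linear map carrying
each member of the first system onto the corresponding member of the second. -/
def RepIso {ι V W : Type*} [AddCommGroup V] [Module ℂ V] [AddCommGroup W] [Module ℂ W]
    (A : ι → Submodule ℂ V) (B : ι → Submodule ℂ W) : Prop :=
  ∃ C : V ≃ₗ[ℂ] W, ∀ i, (A i).map (C : V →ₗ[ℂ] W) = B i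

/-- The representation `π_λ` of the primitive poset `(2,2,2)` in `ℂ³`:
the chains `V₁ = span{e₁} ⊆ V₂ = span{e₁,e₂}`, `V₃ = span{e₃} ⊆ V₄ = span{e₂,e₃}`,
`V₅ = span{e₁+e₂+e₃} ⊆ V₆ = span{e₁+e₂+e₃, λe₁+e₂}` (indices `0,…,5` for `V₁,…,V₆`). -/
def piRep (lam : ℂ) : Fin 6 → Submodule ℂ (Fin 3 → ℂ) :=
  ![Submodule.span ℂ {![1, 0, 0]},
    Submodule.span ℂ {![1, 0, 0], ![0, 1, 0]},
    Submodule.span ℂ {![0, 0, 1]},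
    Submodule.span ℂ {![0, 1, 0], ![0, 0, 1]},
    Submodule.span ℂ {![1, 1, 1]},
    Submodule.span ℂ {![1, 1, 1], ![lam, 1, 0]}]

/-!
An endomorphism of `ℂ³` that maps the first five subspaces of `π_λ` into those of `π_μ` is a
scalar: it preserves the lines through `e₁`, `e₃`, `e₁ + e₂ + e₃` and `e₂` (the last being
`V₂ ∩ V₄`), and the single linear relation among these four vectors forces the four eigenvalues
to agree. A splitting `U ⊕ W` compatible with `π_λ` would make the projection onto `U` along `W`
such a map, although it is neither `0` nor `1`; an isomorphism `π_λ ≅ π_μ` is a nonzero scalar,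
and it carries `λe₁ + e₂` into `V₆(μ)` only if `λ = μ`.
-/

theorem Submodule.map_projection_le {V : Type*} [AddCommGroup V] [Module ℂ V]
    {U W A : Submodule ℂ V} (hUW : IsCompl U W) (hA : A = A ⊓ U ⊔ A ⊓ W) :
    A.map (U.projection W hUW) ≤ A := by
  rintro _ ⟨x, hx, rfl⟩
  rw [SetLike.mem_coe, hA, Submodule.mem_sup] at hx
  obtain ⟨u, hu, w, hw, rfl⟩ := hx
  rw [map_add, Submodule.projection_apply_of_mem_left hUW hu.2,
    Submodule.projection_apply_of_mem_right hUW hw.2, add_zero]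
  exact hu.1

theorem not_isDecomposableSystem_of_forall_eq_smul_id {ι V : Type*} [AddCommGroup V]
    [Module ℂ V] {A : ι → Submodule ℂ V}
    (h : ∀ f : V →ₗ[ℂ] V, (∀ i, (A i).map f ≤ A i) → ∃ a : ℂ, f = a • LinearMap.id) :
    ¬ IsDecomposableSystem A := by
  rintro ⟨U, W, hUW, hU, hW, hA⟩
  obtain ⟨a, ha⟩ := h _ fun i => Submodule.map_projection_le hUW (hA i)
  obtain ⟨u, hu, hu0⟩ := U.ne_bot_iff.mp hU
  obtain ⟨w, hw, hw0⟩ := W.ne_bot_iff.mp hW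
  have h1 : a • u = u := by
    simpa [ha] using Submodule.projection_apply_of_mem_left hUW hu
  have h0 : a • w = 0 := by
    simpa [ha] using Submodule.projection_apply_of_mem_right hUW hw
  rw [smul_eq_zero] at h0
  rcases h0 with rfl | rfl
  · exact hu0 (by simpa using h1.symm)
  · exact hw0 rfl

section piRep

variable {lam : ℂ} {x : Fin 3 → ℂ}

theorem mem_piRep_zero : x ∈ piRep lam 0 ↔ x 1 = 0 ∧ x 2 = 0 := by
  simp only [piRep, Matrix.cons_val]
  rw [Submodule.mem_span_singleton]
  constructor
  · rintro ⟨c, rfl⟩; simp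
  · rintro ⟨h1, h2⟩; exact ⟨x 0, by funext i; fin_cases i <;> simp [h1, h2]⟩

theorem mem_piRep_one : x ∈ piRep lam 1 ↔ x 2 = 0 := by
  simp only [piRep, Matrix.cons_val]
  rw [Submodule.mem_span_pair]
  constructor
  · rintro ⟨m, n, rfl⟩; simp
  · intro h; exact ⟨x 0, x 1, by funext i; fin_cases i <;> simp [h]⟩

theorem mem_piRep_two : x ∈ piRep lam 2 ↔ x 0 = 0 ∧ x 1 = 0 := by
  simp only [piRep, Matrix.cons_val]
  rw [Submodule.mem_span_singleton]
  constructor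
  · rintro ⟨c, rfl⟩; simp
  · rintro ⟨h1, h2⟩; exact ⟨x 2, by funext i; fin_cases i <;> simp [h1, h2]⟩

theorem mem_piRep_three : x ∈ piRep lam 3 ↔ x 0 = 0 := by
  simp only [piRep, Matrix.cons_val]
  rw [Submodule.mem_span_pair]
  constructor
  · rintro ⟨m, n, rfl⟩; simp
  · intro h; exact ⟨x 1, x 2, by funext i; fin_cases i <;> simp [h]⟩

theorem mem_piRep_four : x ∈ piRep lam 4 ↔ x 1 = x 0 ∧ x 2 = x 0 := by
  simp only [piRep, Matrix.cons_val]
  rw [Submodule.mem_span_singleton]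
  constructor
  · rintro ⟨c, rfl⟩; simp
  · rintro ⟨h1, h2⟩; exact ⟨x 0, by funext i; fin_cases i <;> simp [h1, h2]⟩

theorem mem_piRep_five : x ∈ piRep lam 5 ↔ x 0 = lam * x 1 + (1 - lam) * x 2 := by
  simp only [piRep, Matrix.cons_val]
  rw [Submodule.mem_span_pair]
  constructor
  · rintro ⟨m, n, rfl⟩
    simp only [Pi.add_apply, Pi.smul_apply, Matrix.cons_val_zero, Matrix.cons_val_one,
      Matrix.cons_val, smul_eq_mul]
    ring
  · intro h
    refine ⟨x 2, x 1 - x 2, ?_⟩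
    funext i
    fin_cases i <;> simp only [Pi.add_apply, Pi.smul_apply, Matrix.cons_val_zero,
      Matrix.cons_val_one, Matrix.cons_val, smul_eq_mul, Fin.zero_eta, Fin.mk_one,
      Fin.reduceFinMk]
    · linear_combination -h
    · ring
    · ring

end piRep

theorem eq_smul_id_of_map_piRep_le {lam mu : ℂ} {f : (Fin 3 → ℂ) →ₗ[ℂ] Fin 3 → ℂ}
    (hf : ∀ i, (piRep lam i).map f ≤ piRep mu i) : f = f ![1, 0, 0] 0 • LinearMap.id := by
  have maps : ∀ i x, x ∈ piRep lam i → f x ∈ piRep mu i := fun i x hx =>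
    hf i (Submodule.mem_map_of_mem hx)
  obtain ⟨h₁₁, h₁₂⟩ := mem_piRep_zero.mp (maps 0 ![1, 0, 0] (mem_piRep_zero.mpr (by simp)))
  obtain ⟨h₃₀, h₃₁⟩ := mem_piRep_two.mp (maps 2 ![0, 0, 1] (mem_piRep_two.mpr (by simp)))
  have h₂₂ := mem_piRep_one.mp (maps 1 ![0, 1, 0] (mem_piRep_one.mpr (by simp)))
  have h₂₀ := mem_piRep_three.mp (maps 3 ![0, 1, 0] (mem_piRep_three.mpr (by simp)))
  have hsum : f ![1, 1, 1] = f ![1, 0, 0] + f ![0, 1, 0] + f ![0, 0, 1] := by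
    rw [← map_add, ← map_add]; congr 1; funext i; fin_cases i <;> simp
  obtain ⟨hv₁, hv₂⟩ := mem_piRep_four.mp (maps 4 ![1, 1, 1] (mem_piRep_four.mpr (by simp)))
  simp only [hsum, Pi.add_apply, add_zero, zero_add, h₁₁, h₁₂, h₂₀, h₂₂, h₃₀, h₃₁] at hv₁ hv₂
  have hbasis : ∀ x : Fin 3 → ℂ, x = x 0 • ![1, 0, 0] + x 1 • ![0, 1, 0] + x 2 • ![0, 0, 1] := by
    intro x; funext i; fin_cases i <;> simp
  refine LinearMap.ext fun x => funext fun i => ?_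
  conv_lhs => rw [hbasis x]
  simp only [map_add, map_smul, Pi.add_apply, Pi.smul_apply, smul_eq_mul,
    LinearMap.smul_apply, LinearMap.id_apply]
  fin_cases i <;> simp [h₁₁, h₁₂, h₂₀, h₂₂, h₃₀, h₃₁, hv₁, hv₂, mul_comm]

theorem piRep_chains (lam : ℂ) :
    piRep lam 0 ≤ piRep lam 1 ∧ piRep lam 2 ≤ piRep lam 3 ∧ piRep lam 4 ≤ piRep lam 5 := by
  refine ⟨fun x hx => ?_, fun x hx => ?_, fun x hx => ?_⟩
  · exact mem_piRep_one.mpr (mem_piRep_zero.mp hx).2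
  · exact mem_piRep_three.mpr (mem_piRep_two.mp hx).1
  · obtain ⟨h₁, h₂⟩ := mem_piRep_four.mp hx
    rw [mem_piRep_five, h₁, h₂]
    ring

theorem isIndecomposableSystem_piRep (lam : ℂ) : IsIndecomposableSystem (piRep lam) :=
  ⟨⟨![1, 0, 0], fun h => by simpa using congrFun h 0⟩,
    not_isDecomposableSystem_of_forall_eq_smul_id fun _ hf => ⟨_, eq_smul_id_of_map_piRep_le hf⟩⟩

theorem not_repIso_piRep {lam mu : ℂ} (hne : lam ≠ mu) : ¬ RepIso (piRep lam) (piRep mu) := by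
  rintro ⟨C, hC⟩
  set a := C ![1, 0, 0] 0
  have hCa : (C : (Fin 3 → ℂ) →ₗ[ℂ] Fin 3 → ℂ) = a • LinearMap.id :=
    eq_smul_id_of_map_piRep_le fun i => (hC i).le
  have ha : a ≠ 0 := by
    rintro h
    have : C ![1, 0, 0] = 0 := by simpa [h] using LinearMap.congr_fun hCa ![1, 0, 0]
    simpa using congrFun ((map_eq_zero_iff C C.injective).mp this) 0
  have h₅ : C ![lam, 1, 0] ∈ piRep mu 5 :=
    (hC 5).le (Submodule.mem_map_of_mem (mem_piRep_five.mpr (by simp)))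
  rw [show C ![lam, 1, 0] = a • ![lam, 1, 0] from LinearMap.congr_fun hCa _,
    mem_piRep_five] at h₅
  simp only [Pi.smul_apply, Matrix.cons_val_zero, Matrix.cons_val_one, Matrix.cons_val,
    smul_eq_mul, mul_one, mul_zero, add_zero] at h₅
  exact hne (mul_left_cancel₀ ha (by linear_combination h₅))

/-- Each `π_λ` (λ ≠ 0, 1) is a representation of the primitive poset `(2,2,2)` and is
indecomposable, `π_λ ≇ π_μ` for `λ ≠ μ`, and in particular the poset `(2,2,2)` has
infinitely many pairwise non-isomorphic indecomposable representations. -/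
theorem poset222_infinite_family :
    (∀ lam : ℂ, piRep lam 0 ≤ piRep lam 1 ∧ piRep lam 2 ≤ piRep lam 3 ∧
      piRep lam 4 ≤ piRep lam 5) ∧
    (∀ lam : ℂ, lam ≠ 0 → lam ≠ 1 → IsIndecomposableSystem (piRep lam)) ∧
    (∀ lam mu : ℂ, lam ≠ 0 → lam ≠ 1 → mu ≠ 0 → mu ≠ 1 → lam ≠ mu →
      ¬ RepIso (piRep lam) (piRep mu)) ∧
    (∃ f : ℕ → (Fin 6 → Submodule ℂ (Fin 3 → ℂ)),
      (∀ n, f n 0 ≤ f n 1 ∧ f n 2 ≤ f n 3 ∧ f n 4 ≤ f n 5) ∧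
      (∀ n, IsIndecomposableSystem (f n)) ∧
      ∀ n m, n ≠ m → ¬ RepIso (f n) (f m)) := by
  refine ⟨piRep_chains, fun lam _ _ => isIndecomposableSystem_piRep lam,
    fun lam mu _ _ _ _ => not_repIso_piRep, fun n => piRep (n + 2), fun n => piRep_chains _,
    fun n => isIndecomposableSystem_piRep _, fun n m hnm => not_repIso_piRep ?_⟩
  exact_mod_cast hnm ∘ add_right_cancel
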